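/- Let c ≥ 0 and suppose Φ assigns a real number to every 1-Lipschitz function w : C → ℝ such that: (1) for every 1-Lipschitz w : C → ℝ and every request r ∈ M, Φ(T_r(w)) − Φ(w) ≥ ∇(w, r); and (2) there is a constant A with Φ(w) ≤ (c + 1)·(min over X ∈ C of w(X)) + A for every 1-Lipschitz w. Then the Work Function Algorithm is c-competitive: there exists a constant B such that for every initial configuration X_0 ∈ C, every request sequence ρ, and every WFA trajectory for ρ, WFA(ρ) ≤ c·OPT(ρ) + B. -/

import Mathlib

open scoped BigOperators

/-- A configuration: a multiset of `k` points of `M`. -/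
abbrev Conf (M : Type*) (k : ℕ) := Sym M k

/-- Minimum matching cost between two configurations: the minimum over enumerations
of the two multisets of the sum of pointwise distances. -/
noncomputable def confDist {M : Type*} [MetricSpace M] {k : ℕ} (X Y : Conf M k) : ℝ :=
  sInf { c : ℝ | ∃ u v : Fin k → M,
    ((List.ofFn u : List M) : Multiset M) = (X : Multiset M) ∧
    ((List.ofFn v : List M) : Multiset M) = (Y : Multiset M) ∧
    c = ∑ i, dist (u i) (v i) }

/-- The work-function update operator `T_r`. -/
noncomputable def wfUpdate {M : Type*} [MetricSpace M] {k : ℕ}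
    (w : Conf M k → ℝ) (r : M) (X : Conf M k) : ℝ :=
  sInf { c : ℝ | ∃ Y : Conf M k, r ∈ Y ∧ c = w Y + confDist X Y }

/-- The extended cost `∇(w, r)`. -/
noncomputable def extCost {M : Type*} [MetricSpace M] {k : ℕ}
    (w : Conf M k → ℝ) (r : M) : ℝ :=
  sSup { c : ℝ | ∃ X : Conf M k, c = wfUpdate w r X - w X }

/-- The OPT increase `ΔOPT(w, r)`. -/
noncomputable def optIncrease {M : Type*} [MetricSpace M] {k : ℕ}
    (w : Conf M k → ℝ) (r : M) : ℝ :=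
  sInf (Set.range (wfUpdate w r)) - sInf (Set.range w)

/-- The normalized work function `ŵ = w - (min w)·1`. -/
noncomputable def normWF {M : Type*} [MetricSpace M] {k : ℕ}
    (w : Conf M k → ℝ) : Conf M k → ℝ :=
  fun X => w X - sInf (Set.range w)

/-- `w` is 1-Lipschitz with respect to the matching distance on configurations. -/
def LipschitzWF {M : Type*} [MetricSpace M] {k : ℕ} (w : Conf M k → ℝ) : Prop :=
  ∀ X Y : Conf M k, |w X - w Y| ≤ confDist X Y

/-- The initial work function `w₀(X) = d(X₀, X)` for initial configuration `X₀`. -/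
noncomputable def initWF {M : Type*} [MetricSpace M] {k : ℕ} (X₀ : Conf M k) :
    Conf M k → ℝ :=
  fun X => confDist X₀ X

/-- The work function `w_i` after serving the first `i` requests of the sequence `ρ`,
starting from `w₀ = d(X₀, ·)`. -/
noncomputable def wfAt {M : Type*} [MetricSpace M] {k : ℕ} (X₀ : Conf M k)
    (ρ : List M) (i : ℕ) : Conf M k → ℝ :=
  (ρ.take i).foldl (fun w r => wfUpdate w r) (initWF X₀)

/-- `Xs` is a trajectory of the Work Function Algorithm for the request sequence `ρ`
started at `X₀`: `Xs 0 = X₀` and, for each `i < |ρ|`, the configuration `Xs (i+1)`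
contains the request `ρ.get i` and minimizes `w_{i+1}(Y) + d(X_i, Y)` over all
configurations `Y` containing the request. -/
def IsWFATrajectory {M : Type*} [MetricSpace M] {k : ℕ} (X₀ : Conf M k) (ρ : List M)
    (Xs : ℕ → Conf M k) : Prop :=
  Xs 0 = X₀ ∧
  ∀ i : Fin ρ.length,
    ρ.get i ∈ Xs (↑i + 1) ∧
    wfAt X₀ ρ (↑i + 1) (Xs (↑i + 1)) + confDist (Xs ↑i) (Xs (↑i + 1)) =
      sInf { c : ℝ | ∃ Y : Conf M k, ρ.get i ∈ Y ∧
        c = wfAt X₀ ρ (↑i + 1) Y + confDist (Xs ↑i) Y }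

/-- The online cost of the trajectory `Xs` on `ρ`: `WFA(ρ) = Σ_{i<t} d(X_i, X_{i+1})`. -/
noncomputable def WFACost {M : Type*} [MetricSpace M] {k : ℕ} (ρ : List M)
    (Xs : ℕ → Conf M k) : ℝ :=
  ∑ i : Fin ρ.length, confDist (Xs ↑i) (Xs (↑i + 1))

/-- The offline optimum `OPT(ρ) = min_X w_t(X)`. -/
noncomputable def OPTCost {M : Type*} [MetricSpace M] {k : ℕ} (X₀ : Conf M k)
    (ρ : List M) : ℝ :=
  sInf (Set.range (wfAt X₀ ρ ρ.length))

/-!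
The Work Function Algorithm moves to a configuration `X_{i+1}` with
`w_{i+1}(X_{i+1}) + d(X_i, X_{i+1}) = w_{i+1}(X_i)`, because the update `T_r` is idempotent. Hence
`d(X_i, X_{i+1}) = (w_{i+1}(X_i) - w_i(X_i)) - (w_{i+1}(X_{i+1}) - w_i(X_i))`: the first bracket is
at most `∇(w_i, r_{i+1}) ≤ Φ(w_{i+1}) - Φ(w_i)` and the second telescopes. Summing,
`WFA(ρ) + w_t(X_t) ≤ Φ(w_t) - Φ(w_0)`, and the bound `Φ(w_t) ≤ (c + 1)·OPT + A` together with
`w_t(X_t) ≥ OPT` and the finiteness of the set of initial work functions gives `WFA ≤ c·OPT + B`.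
-/

theorem exists_perm_eq_comp_of_ofFn_perm {α : Type*} :
    ∀ {k : ℕ} {u v : Fin k → α}, (List.ofFn u).Perm (List.ofFn v) →
      ∃ σ : Equiv.Perm (Fin k), u = v ∘ σ
  | 0, _, _, _ => ⟨1, funext fun i => i.elim0⟩
  | k + 1, u, v, h => by
    obtain ⟨j, hj⟩ := List.mem_ofFn.mp (h.subset (List.mem_ofFn.mpr ⟨0, rfl⟩))
    -- move the partner of `u 0` to the front of `v`, then match the tails
    have hv' : (v ∘ Equiv.swap 0 j) 0 = u 0 := by simp [hj]
    have htail : (List.ofFn fun i => u i.succ).Perm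
        (List.ofFn fun i => (v ∘ Equiv.swap 0 j) i.succ) := by
      have := h.trans (Equiv.Perm.ofFn_comp_perm (Equiv.swap 0 j) v).symm
      rwa [List.ofFn_succ, List.ofFn_succ, hv', List.perm_cons] at this
    obtain ⟨τ, hτ⟩ := exists_perm_eq_comp_of_ofFn_perm htail
    refine ⟨Equiv.Perm.decomposeFin.symm (j, τ), funext fun i => Fin.cases ?_ (fun i => ?_) i⟩
    · simp [hj]
    · simpa [Equiv.Perm.decomposeFin_symm_apply_succ] using congrFun hτ i

section Enumerations

variable {α : Type*} {k : ℕ}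

def enumerations (X : Sym α k) : Set (Fin k → α) :=
  {u | (List.ofFn u : Multiset α) = X}

theorem exists_perm_eq_comp_of_mem_enumerations {X : Sym α k} {u v : Fin k → α}
    (hu : u ∈ enumerations X) (hv : v ∈ enumerations X) : ∃ σ : Equiv.Perm (Fin k), u = v ∘ σ :=
  exists_perm_eq_comp_of_ofFn_perm (Multiset.coe_eq_coe.mp (hu.trans hv.symm))

theorem enumerations_nonempty (X : Sym α k) : (enumerations X).Nonempty := by
  obtain ⟨s, hs⟩ := X
  have hlen : s.toList.length = k := by rw [Multiset.length_toList, hs]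
  refine ⟨fun i => s.toList[(i : ℕ)], ?_⟩
  show _ = s
  conv_rhs => rw [← Multiset.coe_toList s]
  exact congrArg _ (List.ext_get (by simp [hlen]) fun _ _ _ => by simp)

theorem enumerations_finite (X : Sym α k) : (enumerations X).Finite := by
  obtain ⟨v, hv⟩ := enumerations_nonempty X
  refine (Set.finite_range fun σ : Equiv.Perm (Fin k) => v ∘ σ).subset fun u hu => ?_
  obtain ⟨σ, rfl⟩ := exists_perm_eq_comp_of_mem_enumerations hu hv
  exact ⟨σ, rfl⟩

theorem comp_perm_mem_enumerations {X : Sym α k} {u : Fin k → α} (hu : u ∈ enumerations X)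
    (σ : Equiv.Perm (Fin k)) : u ∘ σ ∈ enumerations X :=
  (Multiset.coe_eq_coe.mpr (Equiv.Perm.ofFn_comp_perm σ u)).trans hu

end Enumerations

section MatchingDistance

variable {M : Type*} [MetricSpace M] {k : ℕ}

def matchingCost (u v : Fin k → M) : ℝ :=
  ∑ i, dist (u i) (v i)

theorem matchingCost_comp_perm (u v : Fin k → M) (σ : Equiv.Perm (Fin k)) :
    matchingCost (u ∘ σ) (v ∘ σ) = matchingCost u v :=
  Equiv.sum_comp σ fun i => dist (u i) (v i)

theorem matchingCost_triangle (u v w : Fin k → M) :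
    matchingCost u w ≤ matchingCost u v + matchingCost v w := by
  rw [matchingCost, matchingCost, matchingCost, ← Finset.sum_add_distrib]
  exact Finset.sum_le_sum fun i _ => dist_triangle _ _ _

theorem confDist_eq_sInf_image2 (X Y : Conf M k) :
    confDist X Y = sInf (Set.image2 matchingCost (enumerations X) (enumerations Y)) := by
  rw [confDist]
  congr 1
  ext c
  constructor
  · rintro ⟨u, v, hu, hv, rfl⟩
    exact ⟨u, hu, v, hv, rfl⟩
  · rintro ⟨u, hu, v, hv, rfl⟩
    exact ⟨u, v, hu, hv, rfl⟩

theorem confDist_le_matchingCost {X Y : Conf M k} {u v : Fin k → M}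
    (hu : u ∈ enumerations X) (hv : v ∈ enumerations Y) : confDist X Y ≤ matchingCost u v := by
  rw [confDist_eq_sInf_image2]
  exact csInf_le ((enumerations_finite X).image2 _ (enumerations_finite Y)).bddBelow
    (Set.mem_image2_of_mem hu hv)

theorem exists_matchingCost_eq_confDist (X Y : Conf M k) :
    ∃ u ∈ enumerations X, ∃ v ∈ enumerations Y, matchingCost u v = confDist X Y := by
  rw [confDist_eq_sInf_image2]
  exact ((enumerations_nonempty X).image2 (enumerations_nonempty Y)).csInf_mem
    ((enumerations_finite X).image2 _ (enumerations_finite Y))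

theorem confDist_nonneg (X Y : Conf M k) : 0 ≤ confDist X Y := by
  obtain ⟨u, -, v, -, huv⟩ := exists_matchingCost_eq_confDist X Y
  exact huv ▸ Finset.sum_nonneg fun i _ => dist_nonneg

theorem confDist_self (X : Conf M k) : confDist X X = 0 := by
  obtain ⟨u, hu⟩ := enumerations_nonempty X
  refine le_antisymm ?_ (confDist_nonneg X X)
  simpa [matchingCost] using confDist_le_matchingCost hu hu

theorem confDist_comm (X Y : Conf M k) : confDist X Y = confDist Y X := by
  have key : ∀ X Y : Conf M k, confDist X Y ≤ confDist Y X := fun X Y => by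
    obtain ⟨v, hv, u, hu, hvu⟩ := exists_matchingCost_eq_confDist Y X
    simpa [← hvu, matchingCost, dist_comm] using confDist_le_matchingCost hu hv
  exact (key X Y).antisymm (key Y X)

theorem confDist_triangle (X Y Z : Conf M k) :
    confDist X Z ≤ confDist X Y + confDist Y Z := by
  obtain ⟨u, hu, v, hv, huv⟩ := exists_matchingCost_eq_confDist X Y
  obtain ⟨v', hv', w, hw, hvw⟩ := exists_matchingCost_eq_confDist Y Z
  obtain ⟨σ, rfl⟩ := exists_perm_eq_comp_of_mem_enumerations hv hv'
  calc confDist X Z ≤ matchingCost u (w ∘ σ) :=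
        confDist_le_matchingCost hu (comp_perm_mem_enumerations hw σ)
    _ ≤ matchingCost u (v' ∘ σ) + matchingCost (v' ∘ σ) (w ∘ σ) := matchingCost_triangle _ _ _
    _ = confDist X Y + confDist Y Z := by rw [matchingCost_comp_perm, huv, hvw]

end MatchingDistance

section WorkFunctions

variable {M : Type*} [MetricSpace M] {k : ℕ}

theorem LipschitzWF.le_add_confDist {w : Conf M k → ℝ} (hw : LipschitzWF w) (X Y : Conf M k) :
    w X ≤ w Y + confDist X Y := by
  linarith [le_of_abs_le (hw X Y)]

theorem lipschitzWF_of_le_add_confDist {w : Conf M k → ℝ}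
    (h : ∀ X Y : Conf M k, w X ≤ w Y + confDist X Y) : LipschitzWF w := fun X Y =>
  abs_sub_le_iff.mpr ⟨by linarith [h X Y], by linarith [h Y X, confDist_comm X Y]⟩

theorem lipschitzWF_initWF (X₀ : Conf M k) : LipschitzWF (initWF X₀) :=
  lipschitzWF_of_le_add_confDist fun X Y => by
    simpa [initWF, confDist_comm X Y] using confDist_triangle X₀ Y X

theorem wfAt_zero (X₀ : Conf M k) (ρ : List M) : wfAt X₀ ρ 0 = initWF X₀ := by
  simp [wfAt]

theorem wfAt_succ (X₀ : Conf M k) (ρ : List M) (i : Fin ρ.length) :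
    wfAt X₀ ρ (i + 1) = wfUpdate (wfAt X₀ ρ i) (ρ.get i) := by
  rw [wfAt, wfAt, List.take_add_one, List.getElem?_eq_getElem i.isLt, List.foldl_append]
  rfl

variable [Finite M]

theorem wfUpdate_le (w : Conf M k → ℝ) {r : M} (X : Conf M k) {Y : Conf M k} (hY : r ∈ Y) :
    wfUpdate w r X ≤ w Y + confDist X Y := by
  refine csInf_le ?_ ⟨Y, hY, rfl⟩
  refine ((Set.finite_range fun Y : Conf M k => w Y + confDist X Y).subset ?_).bddBelow
  rintro _ ⟨Y, -, rfl⟩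
  exact ⟨Y, rfl⟩

theorem exists_wfUpdate_eq (hk : 0 < k) (w : Conf M k → ℝ) (r : M) (X : Conf M k) :
    ∃ Y : Conf M k, r ∈ Y ∧ wfUpdate w r X = w Y + confDist X Y := by
  have hne : {c : ℝ | ∃ Y : Conf M k, r ∈ Y ∧ c = w Y + confDist X Y}.Nonempty :=
    ⟨_, Sym.replicate k r, Sym.mem_replicate.mpr ⟨hk.ne', rfl⟩, rfl⟩
  refine hne.csInf_mem ((Set.finite_range fun Y : Conf M k => w Y + confDist X Y).subset ?_)
  rintro _ ⟨Y, -, rfl⟩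
  exact ⟨Y, rfl⟩

theorem LipschitzWF.le_wfUpdate (hk : 0 < k) {w : Conf M k → ℝ} (hw : LipschitzWF w) (r : M)
    (X : Conf M k) : w X ≤ wfUpdate w r X := by
  obtain ⟨Y, -, hY⟩ := exists_wfUpdate_eq hk w r X
  exact hY ▸ hw.le_add_confDist X Y

theorem lipschitzWF_wfUpdate (hk : 0 < k) (w : Conf M k → ℝ) (r : M) :
    LipschitzWF (wfUpdate w r) :=
  lipschitzWF_of_le_add_confDist fun X X' => by
    obtain ⟨Y, hY, hX'⟩ := exists_wfUpdate_eq hk w r X'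
    linarith [wfUpdate_le w X hY, confDist_triangle X X' Y]

theorem wfUpdate_wfUpdate (hk : 0 < k) (w : Conf M k → ℝ) (r : M) :
    wfUpdate (wfUpdate w r) r = wfUpdate w r := by
  funext X
  refine le_antisymm ?_ ((lipschitzWF_wfUpdate hk w r).le_wfUpdate hk r X)
  obtain ⟨Y, hY, hX⟩ := exists_wfUpdate_eq hk w r X
  have hYY : wfUpdate w r Y ≤ w Y := by simpa [confDist_self] using wfUpdate_le w Y hY
  linarith [wfUpdate_le (wfUpdate w r) X hY]

theorem le_extCost (w : Conf M k → ℝ) (r : M) (X : Conf M k) :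
    wfUpdate w r X - w X ≤ extCost w r := by
  refine le_csSup ?_ ⟨X, rfl⟩
  refine ((Set.finite_range fun X : Conf M k => wfUpdate w r X - w X).subset ?_).bddAbove
  rintro _ ⟨X, rfl⟩
  exact ⟨X, rfl⟩

theorem lipschitzWF_foldl_wfUpdate (hk : 0 < k) (l : List M) {w : Conf M k → ℝ}
    (hw : LipschitzWF w) : LipschitzWF (l.foldl (fun w r => wfUpdate w r) w) := by
  induction l generalizing w with
  | nil => exact hw
  | cons r l ih => exact ih (lipschitzWF_wfUpdate hk w r)

theorem lipschitzWF_wfAt (hk : 0 < k) (X₀ : Conf M k) (ρ : List M) (i : ℕ) :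
    LipschitzWF (wfAt X₀ ρ i) :=
  lipschitzWF_foldl_wfUpdate hk _ (lipschitzWF_initWF X₀)

theorem OPTCost_le (X₀ : Conf M k) (ρ : List M) (X : Conf M k) :
    OPTCost X₀ ρ ≤ wfAt X₀ ρ ρ.length X :=
  csInf_le (Set.finite_range _).bddBelow ⟨X, rfl⟩

end WorkFunctions

theorem Fin.sum_univ_sub_telescope {G : Type*} [AddCommGroup G] (f : ℕ → G) (n : ℕ) :
    ∑ i : Fin n, (f (i + 1) - f i) = f n - f 0 := by
  rw [Fin.sum_univ_eq_sum_range (fun i => f (i + 1) - f i), Finset.sum_range_sub]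

section Trajectories

variable {M : Type*} [MetricSpace M] [Finite M] {k : ℕ} {X₀ : Conf M k} {ρ : List M}
  {Xs : ℕ → Conf M k}

theorem IsWFATrajectory.confDist_succ (hk : 0 < k) (hXs : IsWFATrajectory X₀ ρ Xs)
    (i : Fin ρ.length) :
    confDist (Xs i) (Xs (i + 1)) = wfAt X₀ ρ (i + 1) (Xs i) - wfAt X₀ ρ (i + 1) (Xs (i + 1)) := by
  have hmin := (hXs.2 i).2
  change _ = wfUpdate (wfAt X₀ ρ (i + 1)) (ρ.get i) (Xs i) at hmin
  rw [wfAt_succ, wfUpdate_wfUpdate hk, ← wfAt_succ] at hmin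
  linarith

theorem IsWFATrajectory.wfaCost_add_eq (hk : 0 < k) (hXs : IsWFATrajectory X₀ ρ Xs) :
    WFACost ρ Xs + wfAt X₀ ρ ρ.length (Xs ρ.length) =
      ∑ i : Fin ρ.length, (wfAt X₀ ρ (i + 1) (Xs i) - wfAt X₀ ρ i (Xs i)) := by
  have htel := Fin.sum_univ_sub_telescope (fun i => wfAt X₀ ρ i (Xs i)) ρ.length
  rw [hXs.1, wfAt_zero, initWF, confDist_self, sub_zero] at htel
  rw [WFACost, ← htel, ← Finset.sum_add_distrib]
  refine Finset.sum_congr rfl fun i _ => ?_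
  rw [hXs.confDist_succ hk i]
  ring

theorem IsWFATrajectory.wfaCost_add_le_of_potential (hk : 0 < k) (hXs : IsWFATrajectory X₀ ρ Xs)
    {Φ : (Conf M k → ℝ) → ℝ}
    (hΦ : ∀ w : Conf M k → ℝ, LipschitzWF w → ∀ r : M, Φ (wfUpdate w r) - Φ w ≥ extCost w r) :
    WFACost ρ Xs + wfAt X₀ ρ ρ.length (Xs ρ.length) ≤
      Φ (wfAt X₀ ρ ρ.length) - Φ (wfAt X₀ ρ 0) := by
  rw [hXs.wfaCost_add_eq hk, ← Fin.sum_univ_sub_telescope (fun i => Φ (wfAt X₀ ρ i))]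
  refine Finset.sum_le_sum fun i _ => ?_
  have hstep := hΦ _ (lipschitzWF_wfAt hk X₀ ρ i) (ρ.get i)
  rw [← wfAt_succ] at hstep
  have hext := le_extCost (wfAt X₀ ρ i) (ρ.get i) (Xs i)
  rw [← wfAt_succ] at hext
  linarith

end Trajectories

theorem wfa_competitive_of_potential_general {M : Type*} [Fintype M] [MetricSpace M]
    {k : ℕ} (hk : 0 < k) (c : ℝ)
    (Φ : (Conf M k → ℝ) → ℝ)
    (h1 : ∀ w : Conf M k → ℝ, LipschitzWF w → ∀ r : M,
      Φ (wfUpdate w r) - Φ w ≥ extCost w r)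
    (h2 : ∃ A : ℝ, ∀ w : Conf M k → ℝ, LipschitzWF w →
      Φ w ≤ (c + 1) * sInf (Set.range w) + A) :
    ∃ B : ℝ, ∀ (X₀ : Conf M k) (ρ : List M) (Xs : ℕ → Conf M k),
      IsWFATrajectory X₀ ρ Xs → WFACost ρ Xs ≤ c * OPTCost X₀ ρ + B := by
  obtain ⟨A, hA⟩ := h2
  obtain ⟨m, hm⟩ := (Set.finite_range fun X₀ : Conf M k => Φ (initWF X₀)).bddBelow
  refine ⟨A - m, fun X₀ ρ Xs hXs => ?_⟩
  have hcost := hXs.wfaCost_add_le_of_potential hk h1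
  have hΦt : Φ (wfAt X₀ ρ ρ.length) ≤ (c + 1) * OPTCost X₀ ρ + A :=
    hA _ (lipschitzWF_wfAt hk X₀ ρ ρ.length)
  have hΦ0 : m ≤ Φ (wfAt X₀ ρ 0) := hm ⟨X₀, by rw [wfAt_zero]⟩
  have hopt := OPTCost_le X₀ ρ (Xs ρ.length)
  linarith

/-- If `Φ` assigns a real number to every 1-Lipschitz work function such that
(1) `Φ(T_r(w)) - Φ(w) ≥ ∇(w, r)` for every 1-Lipschitz `w` and request `r`, and
(2) `Φ(w) ≤ (c+1)·min_X w(X) + A` for some constant `A` and every 1-Lipschitz `w`,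
then the Work Function Algorithm is `c`-competitive:
`WFA(ρ) ≤ c·OPT(ρ) + B` for some constant `B`, uniformly over initial configurations,
request sequences and WFA trajectories. -/
theorem wfa_competitive_of_potential {M : Type*} [Fintype M] [MetricSpace M] [Nonempty M]
    {k : ℕ} (hk : 0 < k) (c : ℝ) (hc : 0 ≤ c)
    (Φ : (Conf M k → ℝ) → ℝ)
    (h1 : ∀ w : Conf M k → ℝ, LipschitzWF w → ∀ r : M,
      Φ (wfUpdate w r) - Φ w ≥ extCost w r)
    (h2 : ∃ A : ℝ, ∀ w : Conf M k → ℝ, LipschitzWF w →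
      Φ w ≤ (c + 1) * sInf (Set.range w) + A) :
    ∃ B : ℝ, ∀ (X₀ : Conf M k) (ρ : List M) (Xs : ℕ → Conf M k),
      IsWFATrajectory X₀ ρ Xs → WFACost ρ Xs ≤ c * OPTCost X₀ ρ + B :=
  wfa_competitive_of_potential_general hk c Φ h1 h2
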